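/- arXiv:2401.12967 — 2 statements merged into one kernel-verified Lean document; each statement's English description precedes it below -/
import Mathlib

section
/- Let π₀ be a probability measure on ℝ^d and let h : ℝ^d → ℝ be measurable such that x ↦ (1 + |h(x)|)(1 + e^{−h(x)}) is π₀-integrable, and let g : ℝ^d → ℝ be bounded and measurable. Then the map t ↦ ∫ g dπ_t is differentiable on (0,1) with d/dt ∫ g dπ_t = −( ∫ g·h dπ_t − (∫ g dπ_t)(∫ h dπ_t) ), i.e. the derivative equals minus the covariance of g and h under π_t. In particular, for a bounded positive definite kernel k and each fixed y ∈ ℝ^d, the kernel mean embedding t ↦ ∫ k(y,x) dπ_t(x) satisfies d/dt ∫ k(y,x) dπ_t(x) = −Cov_{x∼π_t}[k(y,x), h(x)]. -/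
open MeasureTheory Real

/-- The tempered interpolation `π_t` between the prior `π₀` and the posterior,
with density `e^{-t·h}/Z_t` with respect to `π₀`. -/
noncomputable def temperedMeasure {d : ℕ} (π₀ : Measure (EuclideanSpace ℝ (Fin d)))
    (h : EuclideanSpace ℝ (Fin d) → ℝ) (t : ℝ) : Measure (EuclideanSpace ℝ (Fin d)) :=
  π₀.withDensity (fun x => ENNReal.ofReal
    (Real.exp (-(t * h x)) / ∫ y, Real.exp (-(t * h y)) ∂π₀))

/-- Covariance of two functions under a measure:
`Cov_π[f,g] = ∫ f·g dπ - (∫ f dπ)(∫ g dπ)`. -/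
noncomputable def covFun {α : Type*} [MeasurableSpace α] (P : Measure α) (f g : α → ℝ) : ℝ :=
  (∫ x, f x * g x ∂P) - (∫ x, f x ∂P) * (∫ x, g x ∂P)

/-! By convexity `e^{-s h} ≤ 1 + e^{-h}` for `s ∈ [0, 1]`, so the integrability hypothesis
dominates `(1 + |h|) e^{-s h}` uniformly in `s ∈ [0, 1]`. Differentiating
under the integral sign gives the derivatives of `N(s) = ∫ g e^{-s h} dπ₀` and
`Z(s) = ∫ e^{-s h} dπ₀`, and the quotient rule applied to `∫ g dπ_s = N(s) / Z(s)` produces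
`-(∫ g h dπ_t - ∫ g dπ_t ∫ h dπ_t)`. -/

lemma exp_neg_mul_le_one_add_exp_neg {s : ℝ} (hs : s ∈ Set.Icc (0 : ℝ) 1) (c : ℝ) :
    exp (-(s * c)) ≤ 1 + exp (-c) := by
  obtain ⟨hs0, hs1⟩ := hs
  rcases le_total 0 c with hc | hc
  · have : exp (-(s * c)) ≤ 1 := exp_le_one_iff.mpr (by nlinarith)
    linarith [exp_pos (-c)]
  · have : exp (-(s * c)) ≤ exp (-c) := exp_le_exp.mpr (by nlinarith)
    linarith

lemma abs_mul_exp_neg_mul_le {s : ℝ} (hs : s ∈ Set.Icc (0 : ℝ) 1) {a b c K : ℝ}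
    (ha : |a| ≤ K) (hb : |b| ≤ 1 + |c|) :
    |a * b * exp (-(s * c))| ≤ K * ((1 + |c|) * (1 + exp (-c))) := by
  rw [abs_mul, abs_mul, abs_of_pos (exp_pos _), ← mul_assoc]
  have hK : 0 ≤ K := (abs_nonneg a).trans ha
  gcongr
  exact exp_neg_mul_le_one_add_exp_neg hs c

section Differentiation

variable {α : Type*} [MeasurableSpace α] {μ : Measure α} {h : α → ℝ}

lemma integrable_mul_exp_neg_mul (hmeas : Measurable h)
    (hint : Integrable (fun x => (1 + |h x|) * (1 + exp (-h x))) μ)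
    {f : α → ℝ} (hf : Measurable f) {K : ℝ} (hK : ∀ x, |f x| ≤ K)
    {s : ℝ} (hs : s ∈ Set.Icc (0 : ℝ) 1) :
    Integrable (fun x => f x * exp (-(s * h x))) μ := by
  refine (hint.const_mul K).mono' (hf.mul (hmeas.const_mul s).neg.exp).aestronglyMeasurable
    (ae_of_all _ fun x => ?_)
  simpa using abs_mul_exp_neg_mul_le (b := 1) hs (hK x) (by simp [abs_nonneg])

lemma hasDerivAt_integral_mul_exp_neg_mul (hmeas : Measurable h)
    (hint : Integrable (fun x => (1 + |h x|) * (1 + exp (-h x))) μ)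
    {f : α → ℝ} (hf : Measurable f) {K : ℝ} (hK : ∀ x, |f x| ≤ K)
    {t : ℝ} (ht : t ∈ Set.Ioo (0 : ℝ) 1) :
    HasDerivAt (fun s => ∫ x, f x * exp (-(s * h x)) ∂μ)
      (-∫ x, f x * h x * exp (-(t * h x)) ∂μ) t := by
  have hderiv := hasDerivAt_integral_of_dominated_loc_of_deriv_le
    (F := fun s x => f x * exp (-(s * h x)))
    (F' := fun s x => -(f x * h x * exp (-(s * h x))))
    (isOpen_Ioo.mem_nhds ht)
    (Filter.Eventually.of_forall fun s => (hf.mul (hmeas.const_mul s).neg.exp).aestronglyMeasurable)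
    (integrable_mul_exp_neg_mul hmeas hint hf hK (Set.Ioo_subset_Icc_self ht))
    (((hf.mul hmeas).mul (hmeas.const_mul t).neg.exp).neg.aestronglyMeasurable)
    (ae_of_all _ fun x s hs => by
      simpa only [norm_neg, norm_eq_abs] using abs_mul_exp_neg_mul_le
        (Set.Ioo_subset_Icc_self hs) (hK x) (le_add_of_nonneg_left zero_le_one))
    (hint.const_mul K)
    (ae_of_all _ fun x s _ =>
      ((((hasDerivAt_mul_const (h x)).neg).exp).const_mul (f x)).congr_deriv
        (by simp only [Pi.neg_apply]; ring))
  simpa only [integral_neg] using hderiv.2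

end Differentiation

lemma temperedMeasure_eq_tilted {d : ℕ} (π₀ : Measure (EuclideanSpace ℝ (Fin d)))
    (h : EuclideanSpace ℝ (Fin d) → ℝ) (s : ℝ) :
    temperedMeasure π₀ h s = π₀.tilted fun x => -(s * h x) :=
  rfl

lemma integral_temperedMeasure {d : ℕ} (π₀ : Measure (EuclideanSpace ℝ (Fin d)))
    (h f : EuclideanSpace ℝ (Fin d) → ℝ) (s : ℝ) :
    ∫ x, f x ∂(temperedMeasure π₀ h s)
      = (∫ x, f x * exp (-(s * h x)) ∂π₀) / ∫ x, exp (-(s * h x)) ∂π₀ := by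
  simp only [temperedMeasure_eq_tilted, integral_tilted, smul_eq_mul, ← integral_div]
  congr 1 with x
  ring

lemma hasDerivAt_integral_temperedMeasure {d : ℕ} (π₀ : Measure (EuclideanSpace ℝ (Fin d)))
    [NeZero π₀] {h : EuclideanSpace ℝ (Fin d) → ℝ} (hmeas : Measurable h)
    (hint : Integrable (fun x => (1 + |h x|) * (1 + exp (-h x))) π₀)
    {g : EuclideanSpace ℝ (Fin d) → ℝ} (hg : Measurable g) {M : ℝ} (hM : ∀ x, |g x| ≤ M)
    {t : ℝ} (ht : t ∈ Set.Ioo (0 : ℝ) 1) :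
    HasDerivAt (fun s => ∫ x, g x ∂(temperedMeasure π₀ h s))
      (-(covFun (temperedMeasure π₀ h t) g h)) t := by
  have hN := hasDerivAt_integral_mul_exp_neg_mul hmeas hint hg hM ht
  have hZ : HasDerivAt (fun s => ∫ x, exp (-(s * h x)) ∂π₀)
      (-∫ x, h x * exp (-(t * h x)) ∂π₀) t := by
    simpa only [one_mul] using hasDerivAt_integral_mul_exp_neg_mul hmeas hint
      (f := fun _ => 1) measurable_const (fun _ => abs_one.le) ht
  have hZ_pos : 0 < ∫ x, exp (-(t * h x)) ∂π₀ := integral_exp_pos <| by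
    simpa only [one_mul] using integrable_mul_exp_neg_mul hmeas hint (f := fun _ => 1)
      measurable_const (fun _ => abs_one.le) (Set.Ioo_subset_Icc_self ht)
  simp only [integral_temperedMeasure π₀ h, covFun]
  refine (hN.div hZ hZ_pos.ne').congr_deriv ?_
  generalize ∫ x, exp (-(t * h x)) ∂π₀ = Z at hZ_pos ⊢
  generalize ∫ x, g x * h x * exp (-(t * h x)) ∂π₀ = Ngh
  generalize ∫ x, g x * exp (-(t * h x)) ∂π₀ = Ng
  generalize ∫ x, h x * exp (-(t * h x)) ∂π₀ = Nh
  field_simp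
  ring

/-- For bounded measurable `g`, the map `t ↦ ∫ g dπ_t` is differentiable on
`(0,1)` with derivative `-Cov_{π_t}[g,h]`; in particular, for a bounded positive definite
kernel `k` and fixed `y`, the kernel mean embedding `t ↦ ∫ k(y,x) dπ_t(x)` satisfies
`d/dt ∫ k(y,·) dπ_t = -Cov_{π_t}[k(y,·), h]`. -/
theorem stmt3 {d : ℕ} (π₀ : Measure (EuclideanSpace ℝ (Fin d))) [IsProbabilityMeasure π₀]
    (h : EuclideanSpace ℝ (Fin d) → ℝ) (hmeas : Measurable h)
    (hint : Integrable (fun x => (1 + |h x|) * (1 + Real.exp (-h x))) π₀) :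
    (∀ (g : EuclideanSpace ℝ (Fin d) → ℝ), Measurable g → (∃ M, ∀ x, |g x| ≤ M) →
      ∀ t ∈ Set.Ioo (0 : ℝ) 1,
        HasDerivAt (fun s => ∫ x, g x ∂(temperedMeasure π₀ h s))
          (-(covFun (temperedMeasure π₀ h t) g h)) t) ∧
    (∀ (k : EuclideanSpace ℝ (Fin d) → EuclideanSpace ℝ (Fin d) → ℝ),
      Measurable (fun p : EuclideanSpace ℝ (Fin d) × EuclideanSpace ℝ (Fin d) => k p.1 p.2) →
      (∃ M, ∀ x y, |k x y| ≤ M) →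
      (∀ x y, k x y = k y x) →
      (∀ (N : ℕ) (α : Fin N → ℝ) (x : Fin N → EuclideanSpace ℝ (Fin d)),
        0 ≤ ∑ i, ∑ j, α i * α j * k (x i) (x j)) →
      ∀ (y : EuclideanSpace ℝ (Fin d)), ∀ t ∈ Set.Ioo (0 : ℝ) 1,
        HasDerivAt (fun s => ∫ x, k y x ∂(temperedMeasure π₀ h s))
          (-(covFun (temperedMeasure π₀ h t) (fun x => k y x) h)) t) := by
  refine ⟨fun g hg ⟨M, hM⟩ t ht => hasDerivAt_integral_temperedMeasure π₀ hmeas hint hg hM ht,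
    fun k hk ⟨M, hM⟩ _ _ y t ht => ?_⟩
  exact hasDerivAt_integral_temperedMeasure π₀ hmeas hint (hk.comp measurable_prodMk_left)
    (hM y) ht
end

section
/- Let k : ℝ^d × ℝ^d → ℝ be symmetric and continuously differentiable in each argument with sup_{x,z} ‖∇_z k(x,z)‖ < ∞, let ρ be a probability measure on ℝ^d, and let C ∈ ℝ^{d×d} be symmetric positive semidefinite. Define G_{ρ,C}(x,y) := ∫ ⟨∇_z k(x,z), C ∇_z k(y,z)⟩ dρ(z). Then for every α ∈ L²(ρ), ∬ α(x) G_{ρ,C}(x,y) α(y) dρ(x) dρ(y) = ∫ ‖C^{1/2} ∫ ∇_z k(x,z) α(x) dρ(x)‖² dρ(z) ≥ 0; in particular the integral operator T : L²(ρ) → L²(ρ), (Tα)(x) := ∫ G_{ρ,C}(x,y) α(y) dρ(y), is a bounded self-adjoint positive operator. -/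
/-!
Writing `v(z) = ∫ α(x) ∇_z k(x,z) dρ(x)`, Fubini (justified by the bounded gradients and
`α ∈ L¹(ρ)`) turns the quadratic form of `G_{ρ,C}` into `∫ ⟨v(z), C v(z)⟩ dρ(z)`, and
`⟨v, C v⟩ = ‖C^{1/2} v‖²`. The kernel is bounded by `‖C‖ M²` and symmetric because `C` is, so `T`
is bounded, symmetric and, by the identity, positive. Measurability of `(x, z) ↦ ∇_z k(x,z)` comes
from difference quotients of `k`, which is jointly measurable as it is continuous in each variable.
-/

open MeasureTheory RealInnerProductSpace Filter Topology
open scoped ENNReal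

/-- The positive semidefinite square root of a positive semidefinite matrix
(removed from Mathlib; restored here with its former definition). -/
noncomputable def Matrix.PosSemidef.sqrt {n 𝕜 : Type*} [Fintype n] [DecidableEq n] [RCLike 𝕜] [PartialOrder 𝕜]
    {A : Matrix n n 𝕜} (hA : A.PosSemidef) : Matrix n n 𝕜 :=
  hA.1.eigenvectorUnitary.1 * Matrix.diagonal ((↑) ∘ (√·) ∘ hA.1.eigenvalues) *
    (star hA.1.eigenvectorUnitary : Matrix n n 𝕜)

/-- The induced kernel `G_{ρ,C}(x,y) = ∫ ⟨∇_z k(x,z), C ∇_z k(y,z)⟩ dρ(z)`. -/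
noncomputable def kernelG {d : ℕ} (k : EuclideanSpace ℝ (Fin d) → EuclideanSpace ℝ (Fin d) → ℝ)
    (ρ : Measure (EuclideanSpace ℝ (Fin d))) (C : Matrix (Fin d) (Fin d) ℝ)
    (x y : EuclideanSpace ℝ (Fin d)) : ℝ :=
  ∫ z, ⟪gradient (fun w => k x w) z,
        Matrix.toEuclideanLin C (gradient (fun w => k y w) z)⟫ ∂ρ

/-- The integral operator `(Tα)(x) = ∫ G_{ρ,C}(x,y) α(y) dρ(y)` on `L²(ρ)`. -/
noncomputable def opT {d : ℕ} (k : EuclideanSpace ℝ (Fin d) → EuclideanSpace ℝ (Fin d) → ℝ)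
    (ρ : Measure (EuclideanSpace ℝ (Fin d))) (C : Matrix (Fin d) (Fin d) ℝ)
    (α : EuclideanSpace ℝ (Fin d) → ℝ) (x : EuclideanSpace ℝ (Fin d)) : ℝ :=
  ∫ y, kernelG k ρ C x y * α y ∂ρ

namespace Matrix.PosSemidef

variable {n : Type*} [Fintype n] [DecidableEq n] {A : Matrix n n ℝ} (hA : A.PosSemidef)
include hA

lemma sqrt_mul_self : hA.sqrt * hA.sqrt = A := by
  set U : Matrix n n ℝ := hA.1.eigenvectorUnitary.1
  set D : Matrix n n ℝ := diagonal (RCLike.ofReal ∘ (√·) ∘ hA.1.eigenvalues)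
  have hU : star U * U = 1 := Unitary.coe_star_mul_self _
  have hD : D * D = diagonal (RCLike.ofReal ∘ hA.1.eigenvalues) := by
    rw [diagonal_mul_diagonal]
    congr 1
    funext i
    simp [Real.mul_self_sqrt (hA.eigenvalues_nonneg i)]
  conv_rhs => rw [hA.1.spectral_theorem, Unitary.conjStarAlgAut_apply]
  calc hA.sqrt * hA.sqrt = U * (D * (star U * U) * D) * star U := by
        simp only [sqrt, U, D, Matrix.mul_assoc]
    _ = _ := by rw [hU, Matrix.mul_one, hD]

lemma isHermitian_sqrt : hA.sqrt.IsHermitian := by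
  simp [IsHermitian, sqrt, Matrix.mul_assoc, star_eq_conjTranspose]

lemma inner_toEuclideanLin_self (u : EuclideanSpace ℝ n) :
    ⟪u, toEuclideanLin A u⟫ = ‖toEuclideanLin hA.sqrt u‖ ^ 2 := by
  have hmul : toEuclideanLin A = toEuclideanLin hA.sqrt ∘ₗ toEuclideanLin hA.sqrt := by
    rw [← toLpLin_mul_same, hA.sqrt_mul_self]
  rw [hmul, LinearMap.comp_apply, ← isSymmetric_toEuclideanLin_iff.mpr hA.isHermitian_sqrt,
    real_inner_self_eq_norm_sq]

end Matrix.PosSemidef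

section Gradient

variable {X E : Type*} [MeasurableSpace X] [NormedAddCommGroup E] [MeasurableSpace E]
  [BorelSpace E] {f : X → E → ℝ}

lemma measurable_fderiv_apply_of_differentiable [NormedSpace ℝ E]
    (hf : Measurable (Function.uncurry f)) (hd : ∀ x, Differentiable ℝ (f x)) (v : E) :
    Measurable fun p : X × E => fderiv ℝ (f p.1) p.2 v := by
  have hquot : ∀ p : X × E,
      Tendsto (fun n : ℕ => (n : ℝ) • (f p.1 (p.2 + (n : ℝ)⁻¹ • v) - f p.1 p.2))
        atTop (𝓝 (fderiv ℝ (f p.1) p.2 v)) := fun p =>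
    ((hd p.1 p.2).hasFDerivAt.lim_real v).comp tendsto_natCast_atTop_atTop
  refine measurable_of_tendsto_metrizable (fun n => ?_) (tendsto_pi_nhds.2 hquot)
  have hshift : Measurable fun p : X × E => f p.1 (p.2 + (n : ℝ)⁻¹ • v) :=
    hf.comp (measurable_fst.prodMk (measurable_snd.add_const _))
  exact (hshift.sub hf).const_smul (n : ℝ)

lemma measurable_gradient_of_differentiable [InnerProductSpace ℝ E] [FiniteDimensional ℝ E]
    (hf : Measurable (Function.uncurry f)) (hd : ∀ x, Differentiable ℝ (f x)) :
    Measurable fun p : X × E => gradient (f p.1) p.2 := by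
  let b := stdOrthonormalBasis ℝ E
  have hexp : (fun p : X × E => gradient (f p.1) p.2)
      = fun p => ∑ i, fderiv ℝ (f p.1) p.2 (b i) • b i := by
    funext p
    conv_lhs => rw [← b.sum_repr' (gradient (f p.1) p.2)]
    simp only [real_inner_comm, inner_gradient_left]
  rw [hexp]
  exact Finset.measurable_sum _ fun i _ =>
    (measurable_fderiv_apply_of_differentiable hf hd (b i)).smul_const _

end Gradient

section GramKernel

variable {X Z E : Type*} [MeasurableSpace Z] [NormedAddCommGroup E] [InnerProductSpace ℝ E]
  {ν : Measure Z}

lemma integral_integral_inner_apply [MeasurableSpace X] {μ : Measure X} [CompleteSpace E]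
    (A : E →L[ℝ] E) {f : X → E} (hf : Integrable f μ) :
    ∫ x, ∫ y, ⟪f x, A (f y)⟫ ∂μ ∂μ = ⟪∫ x, f x ∂μ, A (∫ y, f y ∂μ)⟫ := by
  have hinner : ∀ x, ∫ y, ⟪f x, A (f y)⟫ ∂μ = ⟪A (∫ y, f y ∂μ), f x⟫ := fun x => by
    rw [integral_inner (A.integrable_comp hf), A.integral_comp_comm hf, real_inner_comm]
  simp_rw [hinner]
  rw [integral_inner hf, real_inner_comm]

lemma abs_inner_apply_le (A : E →L[ℝ] E) (u v : E) : |⟪u, A v⟫| ≤ ‖A‖ * ‖u‖ * ‖v‖ :=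
  calc |⟪u, A v⟫| ≤ ‖u‖ * ‖A v‖ := abs_real_inner_le_norm _ _
    _ ≤ ‖u‖ * (‖A‖ * ‖v‖) := by gcongr; exact A.le_opNorm v
    _ = ‖A‖ * ‖u‖ * ‖v‖ := by ring

variable {g : X → Z → E} {M : ℝ}

lemma stronglyMeasurable_integral_inner_apply [MeasurableSpace X] [SFinite ν]
    (hg : StronglyMeasurable (Function.uncurry g)) (A : E →L[ℝ] E) :
    StronglyMeasurable fun p : X × X => ∫ z, ⟪g p.1 z, A (g p.2 z)⟫ ∂ν := by
  have h1 : StronglyMeasurable fun q : (X × X) × Z => g q.1.1 q.2 :=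
    hg.comp_measurable (measurable_fst.fst.prodMk measurable_snd)
  have h2 : StronglyMeasurable fun q : (X × X) × Z => g q.1.2 q.2 :=
    hg.comp_measurable (measurable_fst.snd.prodMk measurable_snd)
  exact (h1.inner (𝕜 := ℝ) (A.continuous.comp_stronglyMeasurable h2)).integral_prod_right'

lemma abs_integral_inner_apply_le [IsProbabilityMeasure ν] (hM : ∀ x z, ‖g x z‖ ≤ M)
    (A : E →L[ℝ] E) (x y : X) :
    |∫ z, ⟪g x z, A (g y z)⟫ ∂ν| ≤ ‖A‖ * M ^ 2 := by
  have h := norm_integral_le_of_norm_le_const (μ := ν) (C := ‖A‖ * M ^ 2) <| ae_of_all _ fun z =>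
    calc ‖⟪g x z, A (g y z)⟫‖ ≤ ‖A‖ * ‖g x z‖ * ‖g y z‖ := abs_inner_apply_le A _ _
      _ ≤ ‖A‖ * M ^ 2 := by
        have hM0 : 0 ≤ M := (norm_nonneg _).trans (hM x z)
        rw [sq, ← mul_assoc]; gcongr <;> exact hM _ _
  simpa using h

lemma integral_integral_mul_integral_inner_apply [CompleteSpace E] [MeasurableSpace X]
    {μ : Measure X} [SFinite μ] [IsFiniteMeasure ν] (hg : StronglyMeasurable (Function.uncurry g))
    (hM : ∀ x z, ‖g x z‖ ≤ M) (A : E →L[ℝ] E) {α : X → ℝ} (hα : Integrable α μ) :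
    ∫ x, ∫ y, α x * (∫ z, ⟪g x z, A (g y z)⟫ ∂ν) * α y ∂μ ∂μ
      = ∫ z, ⟪∫ x, α x • g x z ∂μ, A (∫ x, α x • g x z ∂μ)⟫ ∂ν := by
  set F : (X × X) × Z → ℝ := fun q => ⟪α q.1.1 • g q.1.1 q.2, A (α q.1.2 • g q.1.2 q.2)⟫
  have hF_eq : ∀ x y z, F ((x, y), z) = α x * ⟪g x z, A (g y z)⟫ * α y := fun x y z => by
    simp only [F, map_smul, real_inner_smul_left, real_inner_smul_right]; ring
  have hF_meas : AEStronglyMeasurable F ((μ.prod μ).prod ν) := by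
    have h1 : StronglyMeasurable fun q : (X × X) × Z => g q.1.1 q.2 :=
      hg.comp_measurable (measurable_fst.fst.prodMk measurable_snd)
    have h2 : StronglyMeasurable fun q : (X × X) × Z => g q.1.2 q.2 :=
      hg.comp_measurable (measurable_fst.snd.prodMk measurable_snd)
    exact (hα.1.comp_fst.comp_fst.smul h1.aestronglyMeasurable).inner
      (A.continuous.comp_aestronglyMeasurable (hα.1.comp_snd.comp_fst.smul h2.aestronglyMeasurable))
  have hF : Integrable F ((μ.prod μ).prod ν) := by
    refine Integrable.mono' ((((hα.norm.mul_prod hα.norm).comp_fst ν).const_mul (‖A‖ * M ^ 2)))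
      hF_meas (ae_of_all _ fun q => ?_)
    have hM0 : 0 ≤ M := (norm_nonneg _).trans (hM q.1.1 q.2)
    calc ‖F q‖ ≤ ‖A‖ * ‖α q.1.1 • g q.1.1 q.2‖ * ‖α q.1.2 • g q.1.2 q.2‖ :=
          abs_inner_apply_le A _ _
      _ ≤ ‖A‖ * (‖α q.1.1‖ * M) * (‖α q.1.2‖ * M) := by
        simp only [norm_smul]; gcongr <;> exact hM _ _
      _ = ‖A‖ * M ^ 2 * (‖α q.1.1‖ * ‖α q.1.2‖) := by ring
  have hαg : ∀ z, Integrable (fun x => α x • g x z) μ := fun z =>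
    Integrable.mono' (hα.norm.mul_const M)
      (hα.1.smul (hg.comp_measurable (measurable_id.prodMk measurable_const)).aestronglyMeasurable)
      (ae_of_all _ fun x => by rw [norm_smul]; gcongr; exact hM x z)
  calc ∫ x, ∫ y, α x * (∫ z, ⟪g x z, A (g y z)⟫ ∂ν) * α y ∂μ ∂μ
      = ∫ x, ∫ y, ∫ z, F ((x, y), z) ∂ν ∂μ ∂μ := by
        simp only [hF_eq, integral_mul_const, integral_const_mul]
    _ = ∫ p, ∫ z, F (p, z) ∂ν ∂(μ.prod μ) := (integral_prod _ hF.integral_prod_left).symm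
    _ = ∫ z, ∫ p, F (p, z) ∂(μ.prod μ) ∂ν := integral_integral_swap hF
    _ = ∫ z, ∫ x, ∫ y, F ((x, y), z) ∂μ ∂μ ∂ν := by
        refine integral_congr_ae ?_
        filter_upwards [hF.prod_left_ae] with z hz using integral_prod _ hz
    _ = _ := by simp only [F, integral_integral_inner_apply A (hαg _)]

end GramKernel

section IntegralOperator

variable {X : Type*} [MeasurableSpace X] {μ : Measure X} {G : X → X → ℝ} {K : ℝ} {α β : X → ℝ}

lemma norm_integral_kernel_mul_le (hGK : ∀ x y, |G x y| ≤ K) (hα : Integrable α μ) (x : X) :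
    ‖∫ y, G x y * α y ∂μ‖ ≤ K * ∫ y, ‖α y‖ ∂μ := by
  rw [← integral_const_mul]
  refine norm_integral_le_of_norm_le (hα.norm.const_mul K) (ae_of_all _ fun y => ?_)
  rw [norm_mul]
  gcongr
  exact hGK x y

lemma memLp_integral_kernel_mul [IsFiniteMeasure μ]
    (hG : AEStronglyMeasurable (Function.uncurry G) (μ.prod μ)) (hGK : ∀ x y, |G x y| ≤ K)
    (hα : Integrable α μ) (p : ℝ≥0∞) :
    MemLp (fun x => ∫ y, G x y * α y ∂μ) p μ :=
  MemLp.of_bound (hG.mul hα.1.comp_snd).integral_prod_right' _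
    (ae_of_all _ (norm_integral_kernel_mul_le hGK hα))

lemma eLpNorm_integral_kernel_mul_le [IsProbabilityMeasure μ] (hGK : ∀ x y, |G x y| ≤ K)
    {p : ℝ≥0∞} (hp : 1 ≤ p) (hα : MemLp α p μ) :
    eLpNorm (fun x => ∫ y, G x y * α y ∂μ) p μ ≤ ENNReal.ofReal K * eLpNorm α p μ := by
  have hαi : Integrable α μ := hα.integrable hp
  calc eLpNorm (fun x => ∫ y, G x y * α y ∂μ) p μ
      ≤ ENNReal.ofReal (K * ∫ y, ‖α y‖ ∂μ) := by
        simpa using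
          eLpNorm_le_of_ae_bound (p := p) (ae_of_all μ (norm_integral_kernel_mul_le hGK hαi))
    _ = ENNReal.ofReal K * eLpNorm α 1 μ := by
        rw [ENNReal.ofReal_mul' (integral_nonneg fun _ => norm_nonneg _),
          ofReal_integral_norm_eq_lintegral_enorm hαi, eLpNorm_one_eq_lintegral_enorm]
    _ ≤ ENNReal.ofReal K * eLpNorm α p μ := by
        gcongr; exact eLpNorm_le_eLpNorm_of_exponent_le hp hα.1

lemma integral_integral_kernel_mul_mul_comm [IsFiniteMeasure μ]
    (hG : AEStronglyMeasurable (Function.uncurry G) (μ.prod μ)) (hGK : ∀ x y, |G x y| ≤ K)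
    (hsymm : ∀ x y, G x y = G y x) (hα : Integrable α μ) (hβ : Integrable β μ) :
    ∫ x, (∫ y, G x y * α y ∂μ) * β x ∂μ = ∫ x, α x * ∫ y, G x y * β y ∂μ ∂μ := by
  have hint : Integrable (fun p : X × X => G p.1 p.2 * α p.2 * β p.1) (μ.prod μ) := by
    refine Integrable.mono' ((hβ.norm.mul_prod hα.norm).const_mul K)
      ((hG.mul hα.1.comp_snd).mul hβ.1.comp_fst) (ae_of_all _ fun p => ?_)
    rw [norm_mul, norm_mul, mul_comm ‖β p.1‖, ← mul_assoc]
    gcongr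
    exact hGK _ _
  calc ∫ x, (∫ y, G x y * α y ∂μ) * β x ∂μ
      = ∫ x, ∫ y, G x y * α y * β x ∂μ ∂μ := by simp only [integral_mul_const]
    _ = ∫ y, ∫ x, G x y * α y * β x ∂μ ∂μ := integral_integral_swap hint
    _ = ∫ y, α y * ∫ x, G y x * β x ∂μ ∂μ := by
        congr 1; ext y
        rw [← integral_const_mul]
        congr 1; ext x
        rw [hsymm]; ring

end IntegralOperator

lemma kernelG_comm {d : ℕ} (k : EuclideanSpace ℝ (Fin d) → EuclideanSpace ℝ (Fin d) → ℝ)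
    (ρ : Measure (EuclideanSpace ℝ (Fin d))) {C : Matrix (Fin d) (Fin d) ℝ} (hC : C.IsHermitian)
    (x y : EuclideanSpace ℝ (Fin d)) : kernelG k ρ C x y = kernelG k ρ C y x := by
  unfold kernelG
  congr 1; ext z
  rw [← Matrix.isSymmetric_toEuclideanLin_iff.mpr hC, real_inner_comm]

theorem stmt6_general {d : ℕ} (k : EuclideanSpace ℝ (Fin d) → EuclideanSpace ℝ (Fin d) → ℝ)
    (hk_smooth : ∀ x, ContDiff ℝ 1 (fun z => k x z) ∧ ContDiff ℝ 1 (fun z => k z x))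
    (hk_grad_bdd : ∃ M, ∀ x z, ‖gradient (fun w => k x w) z‖ ≤ M)
    (ρ : Measure (EuclideanSpace ℝ (Fin d))) [IsProbabilityMeasure ρ]
    (C : Matrix (Fin d) (Fin d) ℝ) (hC : C.PosSemidef) :
    (∀ α : EuclideanSpace ℝ (Fin d) → ℝ, MemLp α 2 ρ →
      (∫ x, ∫ y, α x * kernelG k ρ C x y * α y ∂ρ ∂ρ)
        = (∫ z, ‖Matrix.toEuclideanLin hC.sqrt
            (∫ x, α x • gradient (fun w => k x w) z ∂ρ)‖ ^ 2 ∂ρ) ∧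
      0 ≤ ∫ x, ∫ y, α x * kernelG k ρ C x y * α y ∂ρ ∂ρ) ∧
    (∀ α : EuclideanSpace ℝ (Fin d) → ℝ, MemLp α 2 ρ → MemLp (opT k ρ C α) 2 ρ) ∧
    (∃ M : NNReal, ∀ α : EuclideanSpace ℝ (Fin d) → ℝ, MemLp α 2 ρ →
      eLpNorm (opT k ρ C α) 2 ρ ≤ M * eLpNorm α 2 ρ) ∧
    (∀ α β : EuclideanSpace ℝ (Fin d) → ℝ, MemLp α 2 ρ → MemLp β 2 ρ →
      ∫ x, opT k ρ C α x * β x ∂ρ = ∫ x, α x * opT k ρ C β x ∂ρ) ∧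
    (∀ α : EuclideanSpace ℝ (Fin d) → ℝ, MemLp α 2 ρ →
      0 ≤ ∫ x, α x * opT k ρ C α x ∂ρ) := by
  obtain ⟨M, hM⟩ := hk_grad_bdd
  let A := LinearMap.toContinuousLinearMap (Matrix.toEuclideanLin C)
  have hk_meas : Measurable (Function.uncurry k) :=
    measurable_uncurry_of_continuous_of_measurable (fun z => (hk_smooth z).2.continuous)
      fun x => (hk_smooth x).1.continuous.measurable
  have hgrad : StronglyMeasurable fun p : EuclideanSpace ℝ (Fin d) × EuclideanSpace ℝ (Fin d) =>
      gradient (k p.1) p.2 :=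
    (measurable_gradient_of_differentiable hk_meas
      fun x => (hk_smooth x).1.differentiable one_ne_zero).stronglyMeasurable
  have hG_meas : AEStronglyMeasurable (Function.uncurry (kernelG k ρ C)) (ρ.prod ρ) :=
    (stronglyMeasurable_integral_inner_apply (g := fun x z => gradient (k x) z) hgrad A)
      |>.aestronglyMeasurable
  have hG_bdd : ∀ x y, |kernelG k ρ C x y| ≤ ‖A‖ * M ^ 2 := abs_integral_inner_apply_le hM A
  have hquad : ∀ α, MemLp α 2 ρ → ∫ x, ∫ y, α x * kernelG k ρ C x y * α y ∂ρ ∂ρ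
      = ∫ z, ‖Matrix.toEuclideanLin hC.sqrt (∫ x, α x • gradient (fun w => k x w) z ∂ρ)‖ ^ 2 ∂ρ :=
    fun α hα => (integral_integral_mul_integral_inner_apply (g := fun x z => gradient (k x) z)
      hgrad hM A (hα.integrable one_le_two)).trans
      (integral_congr_ae (ae_of_all _ fun z => hC.inner_toEuclideanLin_self _))
  have hform : ∀ α, ∫ x, α x * opT k ρ C α x ∂ρ = ∫ x, ∫ y, α x * kernelG k ρ C x y * α y ∂ρ ∂ρ :=
    fun α => by simp only [opT, ← integral_const_mul, mul_assoc]
  have hnonneg : ∀ α, MemLp α 2 ρ → 0 ≤ ∫ x, ∫ y, α x * kernelG k ρ C x y * α y ∂ρ ∂ρ :=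
    fun α hα => hquad α hα ▸ integral_nonneg fun z => sq_nonneg _
  refine ⟨fun α hα => ⟨hquad α hα, hnonneg α hα⟩,
    fun α hα => memLp_integral_kernel_mul hG_meas hG_bdd (hα.integrable one_le_two) 2,
    ⟨(‖A‖ * M ^ 2).toNNReal, fun α hα => eLpNorm_integral_kernel_mul_le hG_bdd one_le_two hα⟩,
    fun α β hα hβ => integral_integral_kernel_mul_mul_comm hG_meas hG_bdd (kernelG_comm k ρ hC.1)
      (hα.integrable one_le_two) (hβ.integrable one_le_two),
    fun α hα => hform α ▸ hnonneg α hα⟩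

/-- For a symmetric `C¹` kernel with uniformly bounded gradients and `C`
symmetric positive semidefinite, `∬ α(x) G_{ρ,C}(x,y) α(y) dρ dρ
= ∫ ‖C^{1/2} ∫ ∇_z k(x,z) α(x) dρ(x)‖² dρ(z) ≥ 0` for all `α ∈ L²(ρ)`; in particular the
integral operator `T` is bounded, self-adjoint and positive on `L²(ρ)`. -/
theorem stmt6 {d : ℕ} (k : EuclideanSpace ℝ (Fin d) → EuclideanSpace ℝ (Fin d) → ℝ)
    (hk_sym : ∀ x y, k x y = k y x)
    (hk_smooth : ∀ x, ContDiff ℝ 1 (fun z => k x z) ∧ ContDiff ℝ 1 (fun z => k z x))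
    (hk_grad_bdd : ∃ M, ∀ x z, ‖gradient (fun w => k x w) z‖ ≤ M)
    (ρ : Measure (EuclideanSpace ℝ (Fin d))) [IsProbabilityMeasure ρ]
    (C : Matrix (Fin d) (Fin d) ℝ) (hC : C.PosSemidef) :
    (∀ α : EuclideanSpace ℝ (Fin d) → ℝ, MemLp α 2 ρ →
      (∫ x, ∫ y, α x * kernelG k ρ C x y * α y ∂ρ ∂ρ)
        = (∫ z, ‖Matrix.toEuclideanLin hC.sqrt
            (∫ x, α x • gradient (fun w => k x w) z ∂ρ)‖ ^ 2 ∂ρ) ∧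
      0 ≤ ∫ x, ∫ y, α x * kernelG k ρ C x y * α y ∂ρ ∂ρ) ∧
    (∀ α : EuclideanSpace ℝ (Fin d) → ℝ, MemLp α 2 ρ → MemLp (opT k ρ C α) 2 ρ) ∧
    (∃ M : NNReal, ∀ α : EuclideanSpace ℝ (Fin d) → ℝ, MemLp α 2 ρ →
      eLpNorm (opT k ρ C α) 2 ρ ≤ M * eLpNorm α 2 ρ) ∧
    (∀ α β : EuclideanSpace ℝ (Fin d) → ℝ, MemLp α 2 ρ → MemLp β 2 ρ →
      ∫ x, opT k ρ C α x * β x ∂ρ = ∫ x, α x * opT k ρ C β x ∂ρ) ∧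
    (∀ α : EuclideanSpace ℝ (Fin d) → ℝ, MemLp α 2 ρ →
      0 ≤ ∫ x, α x * opT k ρ C α x ∂ρ) :=
  stmt6_general k hk_smooth hk_grad_bdd ρ C hC
end
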